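/- The class of MSGs that are language-equivalent to some local-choice MSG forms a proper subset of the class of MSGs that are language-equivalent to some controllable-choice MSG. -/

import Mathlib

namespace MSC

/-! ## Actions (the alphabet Σ) -/

/-- An action: `send p q m` is `p!q(m)` (process `p` sends a message with
label `m` to process `q`); `recv p q m` is `p?q(m)` (process `p` receives
a message with label `m` from process `q`). -/
inductive Action (P C : Type) where
  | send (p q : P) (m : C)
  | recv (p q : P) (m : C)

namespace Action

/-- The process executing the action. -/
def active {P C : Type} : Action P C → P
  | .send p _ _ => p
  | .recv p _ _ => p

/-- Relabel the message content of an action. -/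
def mapLbl {P C C' : Type} (f : C → C') : Action P C → Action P C'
  | .send p q m => .send p q (f m)
  | .recv p q m => .recv p q (f m)

end Action

/-! ## basic Message Sequence Charts -/

/-- The data of a basic Message Sequence Chart over an event universe `ι`,
processes `P` and message labels `C`: a finite set `E` of events, a
per-process order `procLt` (the union of the total orders `<_p`), a
classification of events into sends (`isSend e = true`) and receives, a map
`proc` assigning each event its process, a pairing `partner` relating each
send with its receive (and vice versa), and a labeling `lbl` of events by
the label of their message. -/
structure PreBMSC (ι P C : Type) where
  E : Finset ι
  procLt : ι → ι → Prop
  isSend : ι → Bool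
  proc : ι → P
  partner : ι → ι
  lbl : ι → C

namespace PreBMSC

variable {ι P C : Type}

/-- The message relation: `(e, partner e)` for each send event `e`. -/
def msgRel (M : PreBMSC ι P C) (e f : ι) : Prop :=
  e ∈ M.E ∧ M.isSend e = true ∧ f = M.partner e

/-- The visual order: the reflexive and transitive closure of the message
pairing together with the per-process orders. -/
def vis (M : PreBMSC ι P C) : ι → ι → Prop :=
  Relation.ReflTransGen (fun e f => M.msgRel e f ∨ M.procLt e f)

/-- The conditions making the data of a `PreBMSC` an actual bMSC: `procLt`
is a (strict) total order on the events of each process, `partner` is an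
involutive pairing of sends with receives of a different process preserving
labels, the visual order is a partial order (antisymmetry), and the FIFO
condition holds. -/
structure IsBMSC (M : PreBMSC ι P C) : Prop where
  procLt_mem : ∀ e f, M.procLt e f → e ∈ M.E ∧ f ∈ M.E ∧ M.proc e = M.proc f
  procLt_irrefl : ∀ e, ¬ M.procLt e e
  procLt_trans : ∀ e f g, M.procLt e f → M.procLt f g → M.procLt e g
  procLt_total : ∀ e ∈ M.E, ∀ f ∈ M.E, M.proc e = M.proc f → e ≠ f →
      M.procLt e f ∨ M.procLt f e
  partner_mem : ∀ e ∈ M.E, M.partner e ∈ M.E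
  partner_invol : ∀ e ∈ M.E, M.partner (M.partner e) = e
  partner_kind : ∀ e ∈ M.E, M.isSend (M.partner e) = !M.isSend e
  partner_proc : ∀ e ∈ M.E, M.proc (M.partner e) ≠ M.proc e
  partner_lbl : ∀ e ∈ M.E, M.lbl (M.partner e) = M.lbl e
  vis_antisymm : ∀ e f, M.vis e f → M.vis f e → e = f
  fifo : ∀ e e', M.isSend e = true → M.isSend e' = true → M.procLt e e' →
      M.proc (M.partner e) = M.proc (M.partner e') →
      M.procLt (M.partner e) (M.partner e')

/-- The letter of the alphabet `Σ` corresponding to an event. -/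
def act (M : PreBMSC ι P C) (e : ι) : Action P C :=
  if M.isSend e then Action.send (M.proc e) (M.proc (M.partner e)) (M.lbl e)
  else Action.recv (M.proc e) (M.proc (M.partner e)) (M.lbl e)

/-- `es` is a linearization (as a sequence of events) of `M`: a total order
of the events of `M` consistent with the visual order. -/
def IsLin [DecidableEq ι] (M : PreBMSC ι P C) (es : List ι) : Prop :=
  es.Nodup ∧ es.toFinset = M.E ∧ ∀ e f, M.vis e f → es.idxOf e ≤ es.idxOf f

/-- The language of a bMSC: all its linearizations, as words over `Σ`. -/
def lang [DecidableEq ι] (M : PreBMSC ι P C) : Set (List (Action P C)) :=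
  { w | ∃ es : List ι, M.IsLin es ∧ w = es.map M.act }

/-- Process `p` initiates `M` if some event of `p` is minimal in the
visual order of `M`. -/
def initiates (M : PreBMSC ι P C) (p : P) : Prop :=
  ∃ e ∈ M.E, M.proc e = p ∧ ∀ f, M.vis f e → f = e

/-- A send event `e` of `M` is a resolving event for a set `P'` of processes
iff for every `p ∈ P'` there is an event of `p` above `e` in the visual order. -/
def IsResolving (M : PreBMSC ι P C) (P' : Set P) (e : ι) : Prop :=
  e ∈ M.E ∧ M.isSend e = true ∧ ∀ p ∈ P', ∃ f ∈ M.E, M.proc f = p ∧ M.vis e f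

/-- `M` contains a resolving event for `P'`. -/
def HasResolving (M : PreBMSC ι P C) (P' : Set P) : Prop :=
  ∃ e, M.IsResolving P' e

/-- `es` is the projection of `M` onto process `p`: the sequence of events
executed by `p` in `M`, in their order of execution. -/
def IsProjection [DecidableEq ι] [DecidableEq P] (M : PreBMSC ι P C) (p : P)
    (es : List ι) : Prop :=
  es.Nodup ∧ es.toFinset = M.E.filter (fun e => M.proc e = p) ∧ es.Pairwise M.procLt

/-- Sequential (weak) composition of two bMSCs: events of the first chart
precede the events of the second chart on each process. -/
def comp [DecidableEq ι] (M₁ M₂ : PreBMSC ι P C) : PreBMSC ι P C where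
  E := M₁.E ∪ M₂.E
  procLt e f := M₁.procLt e f ∨ M₂.procLt e f ∨
    (e ∈ M₁.E ∧ f ∈ M₂.E ∧ M₁.proc e = M₂.proc f)
  isSend e := if e ∈ M₁.E then M₁.isSend e else M₂.isSend e
  proc e := if e ∈ M₁.E then M₁.proc e else M₂.proc e
  partner e := if e ∈ M₁.E then M₁.partner e else M₂.partner e
  lbl e := if e ∈ M₁.E then M₁.lbl e else M₂.lbl e

/-- Renaming of the events of `M` by tagging them with an index `i`
(used to make event sets of the copies along a path disjoint). -/
def tag [DecidableEq ι] (M : PreBMSC ι P C) (i : ℕ) : PreBMSC (ℕ × ι) P C where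
  E := M.E.image (fun e => (i, e))
  procLt e f := e.1 = i ∧ f.1 = i ∧ M.procLt e.2 f.2
  isSend e := M.isSend e.2
  proc e := M.proc e.2
  partner e := (i, M.partner e.2)
  lbl e := M.lbl e.2

/-- The empty bMSC. -/
noncomputable def emptyPre [Nonempty P] [Nonempty C] : PreBMSC ι P C where
  E := ∅
  procLt _ _ := False
  isSend _ := true
  proc _ := Classical.arbitrary P
  partner := id
  lbl _ := Classical.arbitrary C

end PreBMSC

/-! ## Message Sequence Graphs -/

/-- A Message Sequence Graph: a finite directed graph with an initial state
`s0` (no incoming edges), a terminal state `sf` (no outgoing edges), every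
state reachable from `s0`, `sf` reachable from every state, and each state
labeled by a bMSC. -/
structure MSG (ι P C : Type) where
  S : Type
  finS : Finite S
  edge : S → S → Prop
  s0 : S
  sf : S
  lab : S → PreBMSC ι P C
  lab_valid : ∀ s, (lab s).IsBMSC
  s0_no_incoming : ∀ s, ¬ edge s s0
  sf_no_outgoing : ∀ s, ¬ edge sf s
  reachable_from_s0 : ∀ s, Relation.ReflTransGen edge s0 s
  sf_reachable : ∀ s, Relation.ReflTransGen edge s sf

namespace MSG

variable {ι P C : Type} [DecidableEq ι] [Nonempty P] [Nonempty C]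

/-- A path: a nonempty sequence of states along edges. -/
def IsPath (G : MSG ι P C) (σ : List G.S) : Prop :=
  σ ≠ [] ∧ σ.Chain' G.edge

/-- A run: a path from the initial state to the terminal state. -/
def IsRun (G : MSG ι P C) (σ : List G.S) : Prop :=
  σ.Chain' G.edge ∧ σ.head? = some G.s0 ∧ σ.getLast? = some G.sf

/-- The bMSC labeling a path: the sequential composition of (disjointly
renamed copies of) the bMSCs labeling its states. -/
noncomputable def pathLabel (G : MSG ι P C) (σ : List G.S) : PreBMSC (ℕ × ι) P C :=
  ((σ.zipIdx.map Prod.swap).map (fun is => (G.lab is.2).tag is.1)).foldl PreBMSC.comp PreBMSC.emptyPre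

/-- The language of an MSG: the linearizations of the bMSCs labeling its runs. -/
def lang (G : MSG ι P C) : Set (List (Action P C)) :=
  { w | ∃ σ : List G.S, G.IsRun σ ∧ w ∈ (G.pathLabel σ).lang }

/-- `triggers s`: the processes initiating the communication after node `s`. -/
def triggers (G : MSG ι P C) (s : G.S) : Set P :=
  { p | ∃ (s1 : G.S) (σ' : List G.S), G.edge s s1 ∧ (s1 :: σ').Chain' G.edge ∧
        (G.pathLabel (s1 :: σ')).initiates p }

/-- A choice node: a node with more than one outgoing edge. -/
def IsChoice (G : MSG ι P C) (u : G.S) : Prop :=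
  ∃ v w, G.edge u v ∧ G.edge u w ∧ v ≠ w

/-- A local-choice node: a choice node whose `triggers` set is a singleton. -/
def IsLocalChoice (G : MSG ι P C) (u : G.S) : Prop :=
  G.IsChoice u ∧ ∃ p, G.triggers u = {p}

/-- A controllable-choice node: a choice node `u` such that every path from
`s0` to `u`, and every path starting in a successor of `u` and ending in `u`,
is labeled by a bMSC containing a resolving event for `triggers u`. -/
def IsControllableChoice (G : MSG ι P C) (u : G.S) : Prop :=
  G.IsChoice u ∧
  (∀ σ : List G.S, σ.Chain' G.edge → σ.head? = some G.s0 → σ.getLast? = some u →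
      (G.pathLabel σ).HasResolving (G.triggers u)) ∧
  (∀ (s1 : G.S) (σ' : List G.S), G.edge u s1 → (s1 :: σ').Chain' G.edge →
      (s1 :: σ').getLast? = some u →
      (G.pathLabel (s1 :: σ')).HasResolving (G.triggers u))

/-- A local-choice MSG: every choice node is local-choice. -/
def LocalChoice (G : MSG ι P C) : Prop :=
  ∀ u, G.IsChoice u → G.IsLocalChoice u

/-- A controllable-choice MSG: every choice node is local-choice or
controllable-choice. -/
def ControllableChoice (G : MSG ι P C) : Prop :=
  ∀ u, G.IsChoice u → G.IsLocalChoice u ∨ G.IsControllableChoice u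

/-- The end condition for (non-initial) prediction paths: the last node is
a local-choice node, or a controllable-choice node occurring earlier on the
path, or the terminal node. -/
def PredEnd (G : MSG ι P C) (σ : List G.S) : Prop :=
  ∃ u, σ.getLast? = some u ∧
    (G.IsLocalChoice u ∨ (G.IsControllableChoice u ∧ u ∈ σ.dropLast) ∨ u = G.sf)

/-- `σ` is the longest common prefix of all runs of `G` (the `initialPath`). -/
def IsInitialPath (G : MSG ι P C) (σ : List G.S) : Prop :=
  (∀ ρ, G.IsRun ρ → σ <+: ρ) ∧
  ∀ σ' : List G.S, (∀ ρ, G.IsRun ρ → σ' <+: ρ) → σ'.length ≤ σ.length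

/-- A prediction path: either the `initialPath`, or a shortest path (among
paths with the same first node) satisfying the end condition `PredEnd`. -/
def IsPredictionPath (G : MSG ι P C) (σ : List G.S) : Prop :=
  G.IsInitialPath σ ∨
  (σ ≠ [] ∧ σ.Chain' G.edge ∧ G.PredEnd σ ∧
    ∀ σ' : List G.S, σ' ≠ [] → σ'.Chain' G.edge → σ'.head? = σ.head? →
      G.PredEnd σ' → σ.length ≤ σ'.length)

end MSG

/-! ## Communicating Finite-State Machines -/

/-- A Communicating Finite-State Machine: a family of finite-state machines
`(A_p)_{p ∈ P}`, each with a local initial state, local accepting states and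
a transition relation over actions executed by `p`. -/
structure CFM (P C : Type) where
  St : P → Type
  finSt : ∀ p, Finite (St p)
  init : ∀ p, St p
  acc : ∀ p, Set (St p)
  trans : ∀ p, St p → Action P C → St p → Prop
  trans_active : ∀ p s a s', trans p s a s' → a.active = p

namespace CFM

variable {P C : Type}

/-- A configuration of a CFM: local states of all machines together with the
contents of the FIFO channels (`chan p q` is the channel from `p` to `q`). -/
structure Config (A : CFM P C) where
  st : ∀ p, A.St p
  chan : P → P → List C

/-- One step of a CFM: a send enqueues its label at the end of the channel,
a receive dequeues its label from the head of the channel. -/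
def Step (A : CFM P C) (c : A.Config) (a : Action P C) (c' : A.Config) : Prop :=
  match a with
  | .send p q m =>
      A.trans p (c.st p) a (c'.st p) ∧ (∀ r, r ≠ p → c'.st r = c.st r) ∧
      c'.chan p q = c.chan p q ++ [m] ∧
      (∀ x y, ¬(x = p ∧ y = q) → c'.chan x y = c.chan x y)
  | .recv p q m =>
      A.trans p (c.st p) a (c'.st p) ∧ (∀ r, r ≠ p → c'.st r = c.st r) ∧
      c.chan q p = m :: c'.chan q p ∧
      (∀ x y, ¬(x = q ∧ y = p) → c'.chan x y = c.chan x y)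

/-- Multi-step executions of a CFM, labeled by the word of executed actions. -/
inductive Exec (A : CFM P C) : A.Config → List (Action P C) → A.Config → Prop
  | refl (c : A.Config) : Exec A c [] c
  | step {c : A.Config} {a : Action P C} {c' : A.Config} {w : List (Action P C)}
      {c'' : A.Config} :
      A.Step c a c' → Exec A c' w c'' → Exec A c (a :: w) c''

/-- The initial configuration: all machines in their initial states, all
channels empty. -/
def initConfig (A : CFM P C) : A.Config := ⟨A.init, fun _ _ => []⟩

/-- An accepting configuration: every machine in an accepting state and all
channels empty. -/
def Accepting (A : CFM P C) (c : A.Config) : Prop :=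
  (∀ p, c.st p ∈ A.acc p) ∧ ∀ p q, c.chan p q = []

/-- The language of a CFM: words labeling executions from the initial
configuration to an accepting configuration. -/
def lang (A : CFM P C) : Set (List (Action P C)) :=
  { w | ∃ c, A.Exec A.initConfig w c ∧ A.Accepting c }

/-- Deadlock-freedom: from every reachable configuration an accepting
configuration is reachable. -/
def DeadlockFree (A : CFM P C) : Prop :=
  ∀ c w, A.Exec A.initConfig w c → ∃ w' c', A.Exec c w' c' ∧ A.Accepting c'

/-- The local machine `A_p` accepts the word `w` from state `s`. -/
def LocalAccept (A : CFM P C) (p : P) : A.St p → List (Action P C) → Prop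
  | s, [] => s ∈ A.acc p
  | s, a :: w => ∃ s', A.trans p s a s' ∧ LocalAccept A p s' w

/-- The language of the single finite-state machine `A_p`. -/
def localLang (A : CFM P C) (p : P) : Set (List (Action P C)) :=
  { w | A.LocalAccept p (A.init p) w }

end CFM

/-! ## Well-formed and complete words -/

/-- The sequence of labels sent from `p` to `q` in the word `w`. -/
def sendsOn {P C : Type} [DecidableEq P] (p q : P) (w : List (Action P C)) :
    List C :=
  w.filterMap fun a => match a with
    | .send p' q' m => if p' = p ∧ q' = q then some m else none
    | _ => none

/-- The sequence of labels received by `q` from `p` in the word `w`. -/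
def recvsOn {P C : Type} [DecidableEq P] (p q : P) (w : List (Action P C)) :
    List C :=
  w.filterMap fun a => match a with
    | .recv q' p' m => if q' = q ∧ p' = p then some m else none
    | _ => none

/-- A word is well-formed iff in every prefix every receive has a matching
earlier send (FIFO matching on each channel). -/
def WellFormed {P C : Type} [DecidableEq P] (w : List (Action P C)) : Prop :=
  ∀ v, v <+: w → ∀ p q : P, recvsOn p q v <+: sendsOn p q v

/-- A word is complete iff every send has a matching receive. -/
def Complete {P C : Type} [DecidableEq P] (w : List (Action P C)) : Prop :=
  ∀ p q : P, sendsOn p q w = recvsOn p q w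

end MSC

/-!
Every local-choice MSG is controllable-choice. For strictness, `crossingMSG` runs a crossing
(each of two processes sends a message to the other before receiving) and then chooses between a
second crossing and nothing. Its only choice node comes after the first send of the first
crossing, which is resolving for both processes, so it is controllable-choice.

Suppose a local-choice MSG `G` had the same language and take runs of `G` for one and for two
crossings. They branch at a node `u`. A crossing cannot be split between nodes of a path, so
either the whole first crossing follows `u` on the first run, or it lies in the common prefix;
then, the prefix being shared, it is exactly the first crossing of the second run, whose branch
therefore starts with the second crossing. Either way a branch after `u` is initiated by both
processes, so `u` is not local-choice.
-/

namespace MSC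

lemma getElem?_concat_eq_some {α : Type} {l : List α} {a b : α} {i : ℕ} :
    (l ++ [a])[i]? = some b ↔ l[i]? = some b ∨ (i = l.length ∧ a = b) := by
  rcases lt_trichotomy i l.length with h | rfl | h
  · simp [List.getElem?_append_left h, h.ne]
  · simp
  · simp [List.getElem?_eq_none (by simpa using h : (l ++ [a]).length ≤ i),
      List.getElem?_eq_none h.le, h.ne']

lemma lt_length_of_getElem?_eq_some {α : Type} {l : List α} {i : ℕ} {a : α}
    (h : l[i]? = some a) : i < l.length :=
  (List.getElem?_eq_some_iff.1 h).1

@[simp]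
lemma getElem?_append_length_add {α : Type} (l₁ l₂ : List α) (i : ℕ) :
    (l₁ ++ l₂)[l₁.length + i]? = l₂[i]? := by
  rw [List.getElem?_append_right (by omega), Nat.add_sub_cancel_left]

lemma exists_append_cons_of_not_prefix {α : Type} :
    ∀ {l₁ l₂ : List α}, ¬ l₁ <+: l₂ → ¬ l₂ <+: l₁ →
      ∃ c x y t₁ t₂, x ≠ y ∧ l₁ = c ++ x :: t₁ ∧ l₂ = c ++ y :: t₂
  | [], _, h, _ => absurd List.nil_prefix h
  | _, [], _, h => absurd List.nil_prefix h
  | x :: l₁, y :: l₂, h₁, h₂ => by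
    by_cases hxy : x = y
    · subst hxy
      obtain ⟨c, a, b, t₁, t₂, hab, rfl, rfl⟩ := exists_append_cons_of_not_prefix
        (fun h => h₁ (List.cons_prefix_cons.2 ⟨rfl, h⟩))
        (fun h => h₂ (List.cons_prefix_cons.2 ⟨rfl, h⟩))
      exact ⟨x :: c, a, b, t₁, t₂, hab, rfl, rfl⟩
    · exact ⟨[], x, y, l₁, l₂, hxy, rfl, rfl⟩

namespace Action

variable {P C : Type}

instance [DecidableEq P] [DecidableEq C] : DecidableEq (Action P C)
  | .send p q m, .send p' q' m' => decidable_of_iff (p = p' ∧ q = q' ∧ m = m') (by simp)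
  | .recv p q m, .recv p' q' m' => decidable_of_iff (p = p' ∧ q = q' ∧ m = m') (by simp)
  | .send .., .recv .. => isFalse (by simp)
  | .recv .., .send .. => isFalse (by simp)

def isSend : Action P C → Bool
  | .send .. => true
  | .recv .. => false

def dual : Action P C → Action P C
  | .send p q m => .recv q p m
  | .recv p q m => .send q p m

end Action

namespace PreBMSC

variable {ι P C : Type} {M : PreBMSC ι P C} {es : List ι} {w : List (Action P C)}

@[simp]
lemma active_act (e : ι) : (M.act e).active = M.proc e := by
  unfold act; split <;> rfl

@[simp]
lemma isSend_act (e : ι) : (M.act e).isSend = M.isSend e := by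
  unfold act; split <;> simp_all [Action.isSend]

lemma act_getElem_of_map_eq (hw : es.map M.act = w)
    {i : ℕ} (hi : i < es.length) : M.act es[i] = w[i]'(by simp [← hw, hi]) := by
  subst hw; simp

lemma proc_getElem_of_map_eq (hw : es.map M.act = w) {i : ℕ} (hi : i < es.length) :
    M.proc es[i] = (w[i]'(by simp [← hw, hi])).active := by
  rw [← act_getElem_of_map_eq hw hi, active_act]

lemma isSend_getElem_of_map_eq (hw : es.map M.act = w) {i : ℕ} (hi : i < es.length) :
    M.isSend es[i] = (w[i]'(by simp [← hw, hi])).isSend := by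
  rw [← act_getElem_of_map_eq hw hi, isSend_act]

lemma mem_tag_E [DecidableEq ι] {i : ℕ} {e : ℕ × ι} :
    e ∈ (M.tag i).E ↔ e.1 = i ∧ e.2 ∈ M.E := by
  obtain ⟨j, x⟩ := e
  simp [tag, and_comm, eq_comm]

lemma IsBMSC.act_partner (hM : M.IsBMSC) {e : ι} (he : e ∈ M.E) :
    M.act (M.partner e) = (M.act e).dual := by
  unfold act
  rw [hM.partner_kind e he, hM.partner_invol e he, hM.partner_lbl e he]
  cases M.isSend e <;> rfl

lemma IsBMSC.isSend_eq_false_of_msgRel (hM : M.IsBMSC) {g e : ι} (h : M.msgRel g e) :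
    M.isSend e = false := by
  obtain ⟨hg, hs, rfl⟩ := h
  rw [hM.partner_kind g hg, hs]; rfl

lemma emptyPre_isBMSC [Nonempty P] [Nonempty C] : (emptyPre : PreBMSC ι P C).IsBMSC where
  procLt_mem _ _ h := h.elim
  procLt_irrefl _ h := h
  procLt_trans _ _ _ h := h.elim
  procLt_total e he := by simp [emptyPre] at he
  partner_mem e he := by simp [emptyPre] at he
  partner_invol e he := by simp [emptyPre] at he
  partner_kind e he := by simp [emptyPre] at he
  partner_proc e he := by simp [emptyPre] at he
  partner_lbl e he := by simp [emptyPre] at he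
  vis_antisymm e f h _ := by
    rcases h.cases_tail with rfl | ⟨_, _, ⟨hg, _⟩ | h⟩
    · rfl
    · simp [emptyPre] at hg
    · exact h.elim
  fifo _ _ _ _ h := h.elim

lemma IsBMSC.isLin_of_pairwise [DecidableEq ι] (hM : M.IsBMSC) {r : ι → ι → Prop}
    (hnd : es.Nodup) (hE : es.toFinset = M.E)
    (hstep : ∀ e f, M.msgRel e f ∨ M.procLt e f → r e f)
    (hsorted : es.Pairwise fun e f => ¬ r f e) :
    M.IsLin es := by
  have hmem : ∀ {e}, e ∈ M.E → e ∈ es := fun he => by rwa [← hE, List.mem_toFinset] at he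
  refine ⟨hnd, hE, fun e f h => ?_⟩
  induction h with
  | refl => exact le_rfl
  | @tail b c _ h ih =>
    refine ih.trans (not_lt.1 fun hlt => ?_)
    have hb : b ∈ es := by
      rcases h with ⟨h, -⟩ | h
      exacts [hmem h, hmem (hM.procLt_mem _ _ h).1]
    have hc : c ∈ es := by
      rcases h with ⟨h, -, rfl⟩ | h
      exacts [hmem (hM.partner_mem _ h), hmem (hM.procLt_mem _ _ h).2.1]
    have := List.pairwise_iff_getElem.1 hsorted _ _ (List.idxOf_lt_length_iff.2 hc)
      (List.idxOf_lt_length_iff.2 hb) hlt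
    simp only [List.getElem_idxOf] at this
    exact this (hstep _ _ h)

namespace IsLin

variable [DecidableEq ι]

lemma mem_iff (hlin : M.IsLin es) {e : ι} : e ∈ es ↔ e ∈ M.E := by
  rw [← hlin.2.1, List.mem_toFinset]

lemma getElem_mem (hlin : M.IsLin es) {i : ℕ} (hi : i < es.length) : es[i] ∈ M.E :=
  hlin.mem_iff.1 (List.getElem_mem hi)

lemma length_eq (hlin : M.IsLin es) : es.length = M.E.card := by
  rw [← hlin.2.1, List.toFinset_card_of_nodup hlin.1]

lemma le_of_vis (hlin : M.IsLin es) {i j : ℕ} (hi : i < es.length) (hj : j < es.length)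
    (h : M.vis es[i] es[j]) : i ≤ j := by
  simpa [hlin.1.idxOf_getElem] using hlin.2.2 _ _ h

lemma procLt_getElem (hlin : M.IsLin es) (hM : M.IsBMSC) {i j : ℕ} (hi : i < es.length)
    (hj : j < es.length) (hij : i < j) (hp : M.proc es[i] = M.proc es[j]) :
    M.procLt es[i] es[j] := by
  have hne : es[i] ≠ es[j] := fun h => hij.ne (hlin.1.getElem_inj_iff.1 h)
  refine (hM.procLt_total _ (hlin.getElem_mem hi) _ (hlin.getElem_mem hj) hp hne).resolve_right
    fun h => ?_
  exact hij.not_ge (hlin.le_of_vis hj hi (.single (Or.inr h)))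

lemma eq_of_act_eq (hlin : M.IsLin es) (hnd : (es.map M.act).Nodup) {e f : ι} (he : e ∈ M.E)
    (hf : f ∈ M.E) (h : M.act e = M.act f) : e = f :=
  List.inj_on_of_nodup_map hnd (hlin.mem_iff.2 he) (hlin.mem_iff.2 hf) h

lemma forall_pred_of_isSend (hlin : M.IsLin es) (hM : M.IsBMSC) {Q : ι → Prop} {i : ℕ}
    (hi : i < es.length) (hsend : M.isSend es[i] = true)
    (hbefore : ∀ j (hj : j < i), M.proc es[j] = M.proc es[i] → Q es[j]) :
    ∀ g, M.msgRel g es[i] ∨ M.procLt g es[i] → Q g := by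
  rintro g (h | h)
  · simp [hM.isSend_eq_false_of_msgRel h] at hsend
  · obtain ⟨hg, -, hp⟩ := hM.procLt_mem _ _ h
    obtain ⟨j, hj, rfl⟩ := List.getElem_of_mem (hlin.mem_iff.2 hg)
    have hji : j ≤ i := hlin.le_of_vis hj hi (.single (Or.inr h))
    have hne : j ≠ i := by rintro rfl; exact hM.procLt_irrefl _ h
    exact hbefore j (lt_of_le_of_ne hji hne) hp

end IsLin

end PreBMSC

namespace MSG

open PreBMSC

section Runs

variable {ι P C : Type} {G : MSG ι P C}

lemma IsRun.not_prefix {ρ₁ ρ₂ : List G.S} (h₁ : G.IsRun ρ₁) (h₂ : G.IsRun ρ₂) (hne : ρ₁ ≠ ρ₂) :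
    ¬ ρ₁ <+: ρ₂ := by
  rintro ⟨_ | ⟨c, r⟩, rfl⟩
  · simp at hne
  · exact G.sf_no_outgoing c ((List.isChain_append.1 h₂.1).2.2 G.sf h₁.2.2 c rfl)

lemma exists_branch_of_isRun {ρ₁ ρ₂ : List G.S} (h₁ : G.IsRun ρ₁) (h₂ : G.IsRun ρ₂)
    (hne : ρ₁ ≠ ρ₂) : ∃ d u a b t₁ t₂, a ≠ b ∧ ρ₁ = (d ++ [u]) ++ a :: t₁ ∧
      ρ₂ = (d ++ [u]) ++ b :: t₂ := by
  obtain ⟨c, a, b, t₁, t₂, hab, rfl, rfl⟩ :=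
    exists_append_cons_of_not_prefix (h₁.not_prefix h₂ hne) (h₂.not_prefix h₁ hne.symm)
  rcases List.eq_nil_or_concat c with rfl | ⟨d, u, rfl⟩
  · exact absurd (Option.some.inj (h₁.2.1.trans h₂.2.1.symm)) hab
  · exact ⟨d, u, a, b, t₁, t₂, hab, by simp, by simp⟩

lemma IsRun.edge_of_eq_append {d t : List G.S} {u a : G.S} (h : G.IsRun ((d ++ [u]) ++ a :: t)) :
    G.edge u a ∧ (a :: t).IsChain G.edge := by
  obtain ⟨-, hat, hua⟩ := List.isChain_append.1 h.1
  exact ⟨hua u (by simp) a rfl, hat⟩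

end Runs

section PathLabel

variable {ι P C : Type} [DecidableEq ι] [Nonempty P] [Nonempty C]

/-- An event of `G.pathLabel σ` is a pair `(i, x)` of a position `i` in `σ` and an event `x` of
the label of `σ[i]`. Its process order relates events of one copy (`LocalLt`) or of two copies,
earlier to later (`CrossLt`). -/
def LocalLt (G : MSG ι P C) (σ : List G.S) (e f : ℕ × ι) : Prop :=
  ∃ s, σ[e.1]? = some s ∧ f.1 = e.1 ∧ (G.lab s).procLt e.2 f.2

def CrossLt (G : MSG ι P C) (σ : List G.S) (e f : ℕ × ι) : Prop :=
  ∃ s t, σ[e.1]? = some s ∧ σ[f.1]? = some t ∧ e.1 < f.1 ∧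
    e.2 ∈ (G.lab s).E ∧ f.2 ∈ (G.lab t).E ∧ (G.lab s).proc e.2 = (G.lab t).proc f.2

variable {G : MSG ι P C}

lemma pathLabel_append_singleton (σ : List G.S) (s : G.S) :
    G.pathLabel (σ ++ [s]) = (G.pathLabel σ).comp ((G.lab s).tag σ.length) := by
  simp [pathLabel, List.zipIdx_append]

lemma mem_pathLabel_E {σ : List G.S} {e : ℕ × ι} :
    e ∈ (G.pathLabel σ).E ↔ ∃ s, σ[e.1]? = some s ∧ e.2 ∈ (G.lab s).E := by
  induction σ using List.reverseRecOn with
  | nil => simp [pathLabel, emptyPre]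
  | append_singleton σ t ih =>
    rw [pathLabel_append_singleton]
    simp only [comp, Finset.mem_union, ih, mem_tag_E, getElem?_concat_eq_some]
    constructor
    · rintro (⟨s, hs, he⟩ | ⟨h, he⟩)
      exacts [⟨s, Or.inl hs, he⟩, ⟨t, Or.inr ⟨h, rfl⟩, he⟩]
    · rintro ⟨s, hs | ⟨h, rfl⟩, he⟩
      exacts [Or.inl ⟨s, hs, he⟩, Or.inr ⟨h, he⟩]

lemma lt_length_of_mem_pathLabel_E {σ : List G.S} {e : ℕ × ι} (he : e ∈ (G.pathLabel σ).E) :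
    e.1 < σ.length := by
  obtain ⟨s, hs, -⟩ := mem_pathLabel_E.1 he
  exact lt_length_of_getElem?_eq_some hs

lemma pathLabel_fields {σ : List G.S} {e : ℕ × ι} {s : G.S} (hs : σ[e.1]? = some s)
    (he : e.2 ∈ (G.lab s).E) :
    (G.pathLabel σ).isSend e = (G.lab s).isSend e.2 ∧
    (G.pathLabel σ).proc e = (G.lab s).proc e.2 ∧
    (G.pathLabel σ).partner e = (e.1, (G.lab s).partner e.2) ∧
    (G.pathLabel σ).lbl e = (G.lab s).lbl e.2 := by
  induction σ using List.reverseRecOn with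
  | nil => simp at hs
  | append_singleton σ t ih =>
    rw [pathLabel_append_singleton]
    rcases getElem?_concat_eq_some.1 hs with hs | ⟨h, rfl⟩
    · have hmem : e ∈ (G.pathLabel σ).E := mem_pathLabel_E.2 ⟨s, hs, he⟩
      simpa only [comp, if_pos hmem] using ih hs
    · have hmem : e ∉ (G.pathLabel σ).E := fun hm =>
        (lt_length_of_mem_pathLabel_E hm).ne h
      simp only [comp, if_neg hmem, tag, h, and_self]

lemma pathLabel_fields_partner {σ : List G.S} {e : ℕ × ι} {s : G.S} (hs : σ[e.1]? = some s)
    (he : e.2 ∈ (G.lab s).E) :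
    let e' : ℕ × ι := (e.1, (G.lab s).partner e.2)
    (G.pathLabel σ).isSend e' = (G.lab s).isSend e'.2 ∧
    (G.pathLabel σ).proc e' = (G.lab s).proc e'.2 ∧
    (G.pathLabel σ).partner e' = (e.1, (G.lab s).partner e'.2) ∧
    (G.pathLabel σ).lbl e' = (G.lab s).lbl e'.2 :=
  pathLabel_fields hs ((G.lab_valid s).partner_mem _ he)

lemma procLt_pathLabel_iff {σ : List G.S} {e f : ℕ × ι} :
    (G.pathLabel σ).procLt e f ↔ G.LocalLt σ e f ∨ G.CrossLt σ e f := by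
  induction σ using List.reverseRecOn with
  | nil => simp [pathLabel, emptyPre, LocalLt, CrossLt]
  | append_singleton σ t ih =>
    have lift : ∀ {i s}, σ[i]? = some s → (σ ++ [t])[i]? = some s :=
      fun h => getElem?_concat_eq_some.2 (Or.inl h)
    have last : (σ ++ [t])[σ.length]? = some t := getElem?_concat_eq_some.2 (Or.inr ⟨rfl, rfl⟩)
    rw [pathLabel_append_singleton]
    change (G.pathLabel σ).procLt e f ∨ (e.1 = σ.length ∧ f.1 = σ.length ∧
      (G.lab t).procLt e.2 f.2) ∨ (e ∈ (G.pathLabel σ).E ∧ f ∈ ((G.lab t).tag σ.length).E ∧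
        (G.pathLabel σ).proc e = (G.lab t).proc f.2) ↔ _
    rw [ih, mem_tag_E]
    constructor
    · rintro ((⟨s, hs, h1, h2⟩ | ⟨s, s', hs, hs', h⟩) | ⟨h1, h2, h3⟩ | ⟨he, ⟨hf1, hf2⟩, hp⟩)
      · exact Or.inl ⟨s, lift hs, h1, h2⟩
      · exact Or.inr ⟨s, s', lift hs, lift hs', h⟩
      · exact Or.inl ⟨t, h1 ▸ last, h2.trans h1.symm, h3⟩
      · obtain ⟨s, hs, he2⟩ := mem_pathLabel_E.1 he
        refine Or.inr ⟨s, t, lift hs, hf1 ▸ last, hf1 ▸ lt_length_of_getElem?_eq_some hs,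
          he2, hf2, ?_⟩
        rw [← hp, (pathLabel_fields hs he2).2.1]
    · rintro (⟨s, hs, h1, h2⟩ | ⟨s, s', hs, hs', h⟩)
      · rcases getElem?_concat_eq_some.1 hs with hs | ⟨he, rfl⟩
        · exact Or.inl (Or.inl ⟨s, hs, h1, h2⟩)
        · exact Or.inr (Or.inl ⟨he, h1.trans he, h2⟩)
      · obtain ⟨hlt, he2, hf2, hp⟩ := h
        rcases getElem?_concat_eq_some.1 hs with hs | ⟨he, rfl⟩ <;>
          rcases getElem?_concat_eq_some.1 hs' with hs' | ⟨hf, rfl⟩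
        · exact Or.inl (Or.inr ⟨s, s', hs, hs', hlt, he2, hf2, hp⟩)
        · refine Or.inr (Or.inr ⟨mem_pathLabel_E.2 ⟨s, hs, he2⟩, ⟨hf, hf2⟩, ?_⟩)
          rw [(pathLabel_fields hs he2).2.1, hp]
        · have := lt_length_of_getElem?_eq_some hs'; omega
        · omega

lemma msgRel_pathLabel_iff {σ : List G.S} {e f : ℕ × ι} :
    (G.pathLabel σ).msgRel e f ↔ ∃ s, σ[e.1]? = some s ∧ f.1 = e.1 ∧ (G.lab s).msgRel e.2 f.2 := by
  constructor
  · rintro ⟨he, hsend, rfl⟩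
    obtain ⟨s, hs, he2⟩ := mem_pathLabel_E.1 he
    obtain ⟨h1, -, h3, -⟩ := pathLabel_fields hs he2
    exact ⟨s, hs, by rw [h3], he2, h1 ▸ hsend, by rw [h3]⟩
  · rintro ⟨s, hs, h1, he2, hsend, h2⟩
    obtain ⟨f1, -, f3, -⟩ := pathLabel_fields hs he2
    exact ⟨mem_pathLabel_E.2 ⟨s, hs, he2⟩, f1 ▸ hsend, Prod.ext (by rw [f3, h1]) (by rw [f3, h2])⟩

lemma step_pathLabel_cases {σ : List G.S} {e f : ℕ × ι}
    (h : (G.pathLabel σ).msgRel e f ∨ (G.pathLabel σ).procLt e f) :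
    e.1 < f.1 ∨ f.1 = e.1 ∧ ∃ s, σ[e.1]? = some s ∧
      ((G.lab s).msgRel e.2 f.2 ∨ (G.lab s).procLt e.2 f.2) := by
  rw [msgRel_pathLabel_iff, procLt_pathLabel_iff] at h
  rcases h with ⟨s, hs, h1, h2⟩ | ⟨s, hs, h1, h2⟩ | ⟨-, -, -, -, hlt, -⟩
  exacts [Or.inr ⟨h1, s, hs, Or.inl h2⟩, Or.inr ⟨h1, s, hs, Or.inr h2⟩, Or.inl hlt]

lemma vis_pathLabel_cases {σ : List G.S} {e f : ℕ × ι} (h : (G.pathLabel σ).vis e f) :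
    e = f ∨ e.1 < f.1 ∨ f.1 = e.1 ∧ ∃ s, σ[e.1]? = some s ∧ (G.lab s).vis e.2 f.2 := by
  induction h with
  | refl => exact Or.inl rfl
  | tail _ hstep ih =>
    rcases step_pathLabel_cases hstep with hlt | ⟨h1, s, hs, h2⟩
    · rcases ih with rfl | hlt' | ⟨h1', -⟩ <;> omega
    · rcases ih with rfl | hlt' | ⟨h1', s', hs', hv⟩
      · exact Or.inr (Or.inr ⟨h1, s, hs, .single h2⟩)
      · omega
      · rw [h1'] at hs
        obtain rfl : s = s' := Option.some.inj (hs.symm.trans hs')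
        exact Or.inr (Or.inr ⟨h1.trans h1', s, hs', hv.tail h2⟩)

lemma fst_le_of_vis {σ : List G.S} {e f : ℕ × ι} (h : (G.pathLabel σ).vis e f) : e.1 ≤ f.1 := by
  rcases vis_pathLabel_cases h with rfl | hlt | ⟨h1, -⟩ <;> omega

lemma fst_partner {σ : List G.S} {e : ℕ × ι} (he : e ∈ (G.pathLabel σ).E) :
    ((G.pathLabel σ).partner e).1 = e.1 := by
  obtain ⟨s, hs, he2⟩ := mem_pathLabel_E.1 he
  rw [(pathLabel_fields hs he2).2.2.1]

lemma act_pathLabel {σ : List G.S} {e : ℕ × ι} {s : G.S} (hs : σ[e.1]? = some s)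
    (he : e.2 ∈ (G.lab s).E) : (G.pathLabel σ).act e = (G.lab s).act e.2 := by
  obtain ⟨f1, f2, f3, f4⟩ := pathLabel_fields hs he
  obtain ⟨-, g2, -, -⟩ := pathLabel_fields_partner hs he
  unfold act
  rw [f1, f2, f3, f4, g2]

lemma procLt_pathLabel_trans {σ : List G.S} {e f g : ℕ × ι} (hef : (G.pathLabel σ).procLt e f)
    (hfg : (G.pathLabel σ).procLt f g) : (G.pathLabel σ).procLt e g := by
  rw [procLt_pathLabel_iff] at hef hfg ⊢
  rcases hef with ⟨s, hs, h1, h2⟩ | ⟨s, s', hs, hs', hlt, he, hf, hp⟩ <;>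
    rcases hfg with ⟨t, ht, h1', h2'⟩ | ⟨t, t', ht, ht', hlt', hf', hg, hp'⟩
  · rw [h1, hs] at ht
    obtain rfl := Option.some.inj ht
    exact Or.inl ⟨s, hs, h1'.trans h1, (G.lab_valid s).procLt_trans _ _ _ h2 h2'⟩
  · rw [h1, hs] at ht
    obtain rfl := Option.some.inj ht
    obtain ⟨he, -, hp⟩ := (G.lab_valid s).procLt_mem _ _ h2
    exact Or.inr ⟨s, t', hs, ht', h1 ▸ hlt', he, hg, hp.trans hp'⟩
  · rw [hs'] at ht
    obtain rfl := Option.some.inj ht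
    obtain ⟨-, hg, hp'⟩ := (G.lab_valid s').procLt_mem _ _ h2'
    exact Or.inr ⟨s, s', hs, h1' ▸ hs', h1' ▸ hlt, he, hg, hp.trans hp'⟩
  · rw [hs'] at ht
    obtain rfl := Option.some.inj ht
    exact Or.inr ⟨s, t', hs, ht', hlt.trans hlt', he, hg, hp.trans hp'⟩

lemma procLt_pathLabel_total {σ : List G.S} {e f : ℕ × ι} (he : e ∈ (G.pathLabel σ).E)
    (hf : f ∈ (G.pathLabel σ).E) (hp : (G.pathLabel σ).proc e = (G.pathLabel σ).proc f)
    (hne : e ≠ f) : (G.pathLabel σ).procLt e f ∨ (G.pathLabel σ).procLt f e := by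
  obtain ⟨s, hs, he2⟩ := mem_pathLabel_E.1 he
  obtain ⟨t, ht, hf2⟩ := mem_pathLabel_E.1 hf
  rw [(pathLabel_fields hs he2).2.1, (pathLabel_fields ht hf2).2.1] at hp
  simp only [procLt_pathLabel_iff]
  rcases lt_trichotomy e.1 f.1 with hlt | heq | hlt
  · exact Or.inl (Or.inr ⟨s, t, hs, ht, hlt, he2, hf2, hp⟩)
  · rw [heq, ht] at hs
    obtain rfl := Option.some.inj hs
    have hne2 : e.2 ≠ f.2 := fun h => hne (Prod.ext heq h)
    rcases (G.lab_valid t).procLt_total _ he2 _ hf2 hp hne2 with h | h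
    · exact Or.inl (Or.inl ⟨t, heq ▸ ht, heq.symm, h⟩)
    · exact Or.inr (Or.inl ⟨t, ht, heq, h⟩)
  · exact Or.inr (Or.inr ⟨t, s, ht, hs, hlt, hf2, he2, hp.symm⟩)

lemma mem_of_procLt_pathLabel {σ : List G.S} {e f : ℕ × ι} (h : (G.pathLabel σ).procLt e f) :
    e ∈ (G.pathLabel σ).E ∧ f ∈ (G.pathLabel σ).E ∧
      (G.pathLabel σ).proc e = (G.pathLabel σ).proc f := by
  rcases procLt_pathLabel_iff.1 h with ⟨s, hs, h1, h2⟩ | ⟨s, t, hs, ht, -, he, hf, hp⟩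
  · obtain ⟨he, hf, hp⟩ := (G.lab_valid s).procLt_mem _ _ h2
    have ht : σ[f.1]? = some s := h1 ▸ hs
    refine ⟨mem_pathLabel_E.2 ⟨s, hs, he⟩, mem_pathLabel_E.2 ⟨s, ht, hf⟩, ?_⟩
    rw [(pathLabel_fields hs he).2.1, (pathLabel_fields ht hf).2.1, hp]
  · refine ⟨mem_pathLabel_E.2 ⟨s, hs, he⟩, mem_pathLabel_E.2 ⟨t, ht, hf⟩, ?_⟩
    rw [(pathLabel_fields hs he).2.1, (pathLabel_fields ht hf).2.1, hp]

lemma pathLabel_fifo {σ : List G.S} {e e' : ℕ × ι} (hs : (G.pathLabel σ).isSend e = true)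
    (hs' : (G.pathLabel σ).isSend e' = true) (hlt : (G.pathLabel σ).procLt e e')
    (hp : (G.pathLabel σ).proc ((G.pathLabel σ).partner e) =
      (G.pathLabel σ).proc ((G.pathLabel σ).partner e')) :
    (G.pathLabel σ).procLt ((G.pathLabel σ).partner e) ((G.pathLabel σ).partner e') := by
  obtain ⟨he, he', -⟩ := mem_of_procLt_pathLabel hlt
  obtain ⟨s, hes, he₂⟩ := mem_pathLabel_E.1 he
  obtain ⟨t, het, he₂'⟩ := mem_pathLabel_E.1 he'
  obtain ⟨f1, -, f3, -⟩ := pathLabel_fields hes he₂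
  obtain ⟨f1', -, f3', -⟩ := pathLabel_fields het he₂'
  rw [f3, f3', (pathLabel_fields_partner hes he₂).2.1,
    (pathLabel_fields_partner het he₂').2.1] at hp
  rw [procLt_pathLabel_iff] at hlt
  rw [f3, f3', procLt_pathLabel_iff]
  rcases hlt with ⟨s', hs₁, h1, h2⟩ | ⟨-, -, -, -, hlt, -⟩
  · rw [hes] at hs₁
    rw [h1, hes] at het
    obtain rfl := Option.some.inj hs₁
    obtain rfl := Option.some.inj het
    exact Or.inl ⟨s, hes, h1, (G.lab_valid s).fifo _ _ (f1 ▸ hs) (f1' ▸ hs') h2 hp⟩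
  · exact Or.inr ⟨s, t, hes, het, hlt, (G.lab_valid s).partner_mem _ he₂,
      (G.lab_valid t).partner_mem _ he₂', hp⟩

theorem isBMSC_pathLabel (σ : List G.S) : (G.pathLabel σ).IsBMSC := by
  set M := G.pathLabel σ
  have partner_facts : ∀ e ∈ M.E, M.partner e ∈ M.E ∧ M.partner (M.partner e) = e ∧
      M.isSend (M.partner e) = !M.isSend e ∧ M.proc (M.partner e) ≠ M.proc e ∧
      M.lbl (M.partner e) = M.lbl e := by
    intro e he
    obtain ⟨s, hs, he2⟩ := mem_pathLabel_E.1 he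
    have hM := G.lab_valid s
    obtain ⟨f1, f2, f3, f4⟩ := pathLabel_fields hs he2
    obtain ⟨g1, g2, g3, g4⟩ := pathLabel_fields_partner hs he2
    rw [f3, g1, g2, g3, g4, f1, f2, f4]
    exact ⟨mem_pathLabel_E.2 ⟨s, hs, hM.partner_mem _ he2⟩, by rw [hM.partner_invol _ he2],
      hM.partner_kind _ he2, hM.partner_proc _ he2, hM.partner_lbl _ he2⟩
  refine
    { procLt_mem := fun _ _ => mem_of_procLt_pathLabel
      procLt_irrefl := fun e h => ?_
      procLt_trans := fun _ _ _ => procLt_pathLabel_trans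
      procLt_total := fun _ he _ hf => procLt_pathLabel_total he hf
      partner_mem := fun e he => (partner_facts e he).1
      partner_invol := fun e he => (partner_facts e he).2.1
      partner_kind := fun e he => (partner_facts e he).2.2.1
      partner_proc := fun e he => (partner_facts e he).2.2.2.1
      partner_lbl := fun e he => (partner_facts e he).2.2.2.2
      vis_antisymm := fun e f h h' => ?_
      fifo := fun _ _ => pathLabel_fifo }
  · rcases procLt_pathLabel_iff.1 h with ⟨s, -, -, h⟩ | ⟨-, -, -, -, h, -⟩
    exacts [(G.lab_valid s).procLt_irrefl _ h, lt_irrefl _ h]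
  · rcases vis_pathLabel_cases h with rfl | hlt | ⟨h1, s, hs, hv⟩
    · rfl
    · exact absurd (fst_le_of_vis h') hlt.not_ge
    · rcases vis_pathLabel_cases h' with rfl | hlt | ⟨-, s', hs', hv'⟩
      · rfl
      · omega
      · rw [h1, hs] at hs'
        obtain rfl := Option.some.inj hs'
        exact Prod.ext h1.symm ((G.lab_valid s).vis_antisymm _ _ hv hv')

lemma mem_pathLabel_append_E_iff {d τ τ' : List G.S} {e : ℕ × ι} (h : e.1 < d.length) :
    e ∈ (G.pathLabel (d ++ τ)).E ↔ e ∈ (G.pathLabel (d ++ τ')).E := by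
  simp only [mem_pathLabel_E, List.getElem?_append_left h]

lemma act_pathLabel_append {d τ τ' : List G.S} {e : ℕ × ι} (h : e.1 < d.length)
    (he : e ∈ (G.pathLabel (d ++ τ)).E) :
    (G.pathLabel (d ++ τ)).act e = (G.pathLabel (d ++ τ')).act e := by
  obtain ⟨s, hs, he2⟩ := mem_pathLabel_E.1 he
  rw [List.getElem?_append_left h] at hs
  rw [act_pathLabel (by rwa [List.getElem?_append_left h]) he2,
    act_pathLabel (by rwa [List.getElem?_append_left h]) he2]

lemma eq_of_act_eq_of_lt_length {d τ τ' : List G.S} {es : List (ℕ × ι)}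
    (hlin : (G.pathLabel (d ++ τ)).IsLin es) (hnd : (es.map (G.pathLabel (d ++ τ)).act).Nodup)
    {e f : ℕ × ι} (he : e ∈ (G.pathLabel (d ++ τ')).E) (hf : f ∈ (G.pathLabel (d ++ τ')).E)
    (hel : e.1 < d.length) (hfl : f.1 < d.length)
    (h : (G.pathLabel (d ++ τ')).act e = (G.pathLabel (d ++ τ')).act f) : e = f := by
  rw [act_pathLabel_append hel he, act_pathLabel_append hfl hf] at h
  exact hlin.eq_of_act_eq hnd ((mem_pathLabel_append_E_iff hel).1 he)
    ((mem_pathLabel_append_E_iff hfl).1 hf) h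

lemma step_pathLabel_append {d τ : List G.S} {g e : ℕ × ι}
    (h : (G.pathLabel τ).msgRel g e ∨ (G.pathLabel τ).procLt g e) :
    (G.pathLabel (d ++ τ)).msgRel (d.length + g.1, g.2) (d.length + e.1, e.2) ∨
      (G.pathLabel (d ++ τ)).procLt (d.length + g.1, g.2) (d.length + e.1, e.2) := by
  simpa [msgRel_pathLabel_iff, procLt_pathLabel_iff, LocalLt, CrossLt] using h

lemma initiates_suffix {d τ : List G.S} {e : ℕ × ι} (he : e ∈ (G.pathLabel (d ++ τ)).E)
    (hle : d.length ≤ e.1)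
    (hpred : ∀ g, (G.pathLabel (d ++ τ)).msgRel g e ∨ (G.pathLabel (d ++ τ)).procLt g e →
      g.1 < d.length) :
    (G.pathLabel τ).initiates ((G.pathLabel (d ++ τ)).proc e) := by
  obtain ⟨e₁, e₂⟩ := e
  obtain ⟨i, rfl⟩ := Nat.exists_eq_add_of_le hle
  obtain ⟨s, hs, he₂⟩ := mem_pathLabel_E.1 he
  have hs' : τ[i]? = some s := by simpa using hs
  refine ⟨(i, e₂), mem_pathLabel_E.2 ⟨s, hs', he₂⟩, ?_, fun g hg => ?_⟩
  · rw [(pathLabel_fields hs he₂).2.1, (pathLabel_fields (e := (i, e₂)) hs' he₂).2.1]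
  · rcases hg.cases_tail with rfl | ⟨c, -, hc⟩
    · rfl
    · have := hpred _ (step_pathLabel_append hc)
      simp at this

lemma initiates_of_isLin {d τ : List G.S} {es : List (ℕ × ι)} {w : List (Action P C)}
    (hlin : (G.pathLabel (d ++ τ)).IsLin es) (hw : es.map (G.pathLabel (d ++ τ)).act = w)
    {i : ℕ} (hi : i < es.length) (hsend : (w[i]'(by simp [← hw, hi])).isSend = true)
    (hle : d.length ≤ es[i].1)
    (hbefore : ∀ j (hj : j < i), (w[j]'(by simp [← hw]; omega)).active =
      (w[i]'(by simp [← hw, hi])).active → es[j].1 < d.length) :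
    (G.pathLabel τ).initiates (w[i]'(by simp [← hw, hi])).active := by
  rw [← proc_getElem_of_map_eq hw hi]
  refine initiates_suffix (hlin.getElem_mem hi) hle
    (hlin.forall_pred_of_isSend (isBMSC_pathLabel _) hi ?_ fun j hj hp => ?_)
  · rwa [isSend_getElem_of_map_eq hw hi]
  · rw [proc_getElem_of_map_eq hw, proc_getElem_of_map_eq hw hi] at hp
    exact hbefore j hj hp

lemma LocalChoice.controllableChoice (hG : G.LocalChoice) : G.ControllableChoice :=
  fun u hu => Or.inl (hG u hu)

end PathLabel

end MSG

def crossingWord : List (Action Bool Bool) :=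
  [.send true false true, .send false true true, .recv false true true, .recv true false true]

namespace MSG

open PreBMSC

variable {ι : Type} [DecidableEq ι] {G : MSG ι Bool Bool}

lemma fst_eq_of_isLin_crossingWord {σ : List G.S} {es : List (ℕ × ι)}
    (hlin : (G.pathLabel σ).IsLin es) (hw : es.map (G.pathLabel σ).act = crossingWord)
    {e f : ℕ × ι} (he : e ∈ (G.pathLabel σ).E) (hf : f ∈ (G.pathLabel σ).E) : e.1 = f.1 := by
  have hM := isBMSC_pathLabel (G := G) σ
  have hlen : es.length = 4 := by simpa [crossingWord] using congrArg List.length hw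
  have hnd : (es.map (G.pathLabel σ).act).Nodup := by rw [hw]; decide
  have hmem : ∀ i (hi : i < es.length), es[i] ∈ (G.pathLabel σ).E := fun i hi =>
    hlin.getElem_mem hi
  have h02 : (G.pathLabel σ).partner es[0] = es[2] :=
    hlin.eq_of_act_eq hnd (hM.partner_mem _ (hmem 0 _)) (hmem 2 _) (by
      rw [hM.act_partner (hmem 0 _), act_getElem_of_map_eq hw, act_getElem_of_map_eq hw]; rfl)
  have h13 : (G.pathLabel σ).partner es[1] = es[3] :=
    hlin.eq_of_act_eq hnd (hM.partner_mem _ (hmem 1 _)) (hmem 3 _) (by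
      rw [hM.act_partner (hmem 1 _), act_getElem_of_map_eq hw, act_getElem_of_map_eq hw]; rfl)
  have h03 : es[0].1 ≤ es[3].1 := fst_le_of_vis (.single (Or.inr
    (hlin.procLt_getElem hM _ _ (by norm_num) (by
      rw [proc_getElem_of_map_eq hw, proc_getElem_of_map_eq hw]; rfl))))
  have h12 : es[1].1 ≤ es[2].1 := fst_le_of_vis (.single (Or.inr
    (hlin.procLt_getElem hM _ _ (by norm_num) (by
      rw [proc_getElem_of_map_eq hw, proc_getElem_of_map_eq hw]; rfl))))
  have h20 := h02 ▸ fst_partner (hmem 0 _)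
  have h31 := h13 ▸ fst_partner (hmem 1 _)
  have hfst : ∀ i (hi : i < es.length), es[i].1 = es[0].1 := by
    intro i hi
    rw [hlen] at hi
    interval_cases i <;> omega
  obtain ⟨i, hi, rfl⟩ := List.getElem_of_mem (hlin.mem_iff.2 he)
  obtain ⟨j, hj, rfl⟩ := List.getElem_of_mem (hlin.mem_iff.2 hf)
  rw [hfst i hi, hfst j hj]

lemma initiates_of_isLin_crossingWord {d τ : List G.S} {es : List (ℕ × ι)}
    (hlin : (G.pathLabel (d ++ τ)).IsLin es)
    (hw : es.map (G.pathLabel (d ++ τ)).act = crossingWord)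
    (hle : ∀ e ∈ (G.pathLabel (d ++ τ)).E, d.length ≤ e.1) (p : Bool) :
    (G.pathLabel τ).initiates p := by
  have hlen : es.length = 4 := by simpa [crossingWord] using congrArg List.length hw
  cases p
  · exact initiates_of_isLin hlin hw (i := 1) (by omega) rfl (hle _ (hlin.getElem_mem _))
      fun j hj hp => by interval_cases j; exact Bool.noConfusion hp
  · exact initiates_of_isLin hlin hw (i := 0) (by omega) rfl (hle _ (hlin.getElem_mem _))
      fun j hj => absurd hj j.not_lt_zero

lemma fst_lt_iff_of_isLin_crossingWord_append {d τ₁ τ₂ : List G.S} {es₁ es₂ : List (ℕ × ι)}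
    (hlin₁ : (G.pathLabel (d ++ τ₁)).IsLin es₁)
    (hw₁ : es₁.map (G.pathLabel (d ++ τ₁)).act = crossingWord)
    (hlin₂ : (G.pathLabel (d ++ τ₂)).IsLin es₂)
    (hw₂ : es₂.map (G.pathLabel (d ++ τ₂)).act = crossingWord ++ crossingWord)
    (hlt : ∃ e ∈ (G.pathLabel (d ++ τ₁)).E, e.1 < d.length) :
    ∀ j (hj : j < es₂.length), es₂[j].1 < d.length ↔ j < 4 := by
  have hlen₁ : es₁.length = 4 := by simpa [crossingWord] using congrArg List.length hw₁
  have hlen₂ : es₂.length = 8 := by simpa [crossingWord] using congrArg List.length hw₂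
  have hnd₁ : (es₁.map (G.pathLabel (d ++ τ₁)).act).Nodup := by rw [hw₁]; decide
  have hlow₁ : ∀ e ∈ (G.pathLabel (d ++ τ₁)).E, e.1 < d.length := by
    obtain ⟨e₀, he₀, h₀⟩ := hlt
    exact fun e he => fst_eq_of_isLin_crossingWord hlin₁ hw₁ he he₀ ▸ h₀
  -- `d` carries each action at most once, like the first chart, and the first copy of an action
  -- precedes the second on its process
  have hhigh : ∀ k (hk : k + 4 < es₂.length), d.length ≤ es₂[k + 4].1 := by
    intro k hk
    by_contra! h
    have hk4 : k < 4 := by omega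
    have hp : (G.pathLabel (d ++ τ₂)).proc es₂[k] = (G.pathLabel (d ++ τ₂)).proc es₂[k + 4] := by
      rw [proc_getElem_of_map_eq hw₂, proc_getElem_of_map_eq hw₂]
      interval_cases k <;> rfl
    have hk' : es₂[k].1 < d.length := (fst_le_of_vis (.single (Or.inr
      (hlin₂.procLt_getElem (isBMSC_pathLabel _) _ _ (by omega) hp)))).trans_lt h
    have := eq_of_act_eq_of_lt_length hlin₁ hnd₁ (hlin₂.getElem_mem _) (hlin₂.getElem_mem _)
      hk' h (by rw [act_getElem_of_map_eq hw₂, act_getElem_of_map_eq hw₂]; interval_cases k <;> rfl)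
    exact absurd (hlin₂.1.getElem_inj_iff.1 this) (by omega)
  have hcross : ∀ i (hi : i < 8) j (hj : j < 4),
      (crossingWord ++ crossingWord)[i] = crossingWord[j] → i = j ∨ i = j + 4 := by decide
  intro j hj
  refine ⟨fun hjl => ?_, fun hj4 => ?_⟩
  · by_contra! h4
    obtain ⟨k, rfl⟩ := Nat.exists_eq_add_of_le' h4
    exact (hhigh k hj).not_gt hjl
  · have he := hlin₁.getElem_mem (i := j) (by omega)
    have hel := hlow₁ _ he
    obtain ⟨i, hi, hie⟩ := List.getElem_of_mem
      (hlin₂.mem_iff.2 ((mem_pathLabel_append_E_iff hel).1 he))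
    have hact := act_getElem_of_map_eq hw₂ hi
    rw [hie, ← act_pathLabel_append hel he, act_getElem_of_map_eq hw₁] at hact
    rcases hcross i (by omega) j hj4 hact.symm with rfl | rfl
    · rwa [hie]
    · exact absurd (hie ▸ hel) (hhigh j hi).not_gt

lemma initiates_of_isLin_crossingWord_append {d τ₁ τ₂ : List G.S} {es₁ es₂ : List (ℕ × ι)}
    (hlin₁ : (G.pathLabel (d ++ τ₁)).IsLin es₁)
    (hw₁ : es₁.map (G.pathLabel (d ++ τ₁)).act = crossingWord)
    (hlin₂ : (G.pathLabel (d ++ τ₂)).IsLin es₂)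
    (hw₂ : es₂.map (G.pathLabel (d ++ τ₂)).act = crossingWord ++ crossingWord)
    (hlt : ∃ e ∈ (G.pathLabel (d ++ τ₁)).E, e.1 < d.length) (p : Bool) :
    (G.pathLabel τ₂).initiates p := by
  have hlen : es₂.length = 8 := by simpa [crossingWord] using congrArg List.length hw₂
  have hfst := fst_lt_iff_of_isLin_crossingWord_append hlin₁ hw₁ hlin₂ hw₂ hlt
  have hle : ∀ i (hi : i < es₂.length), 4 ≤ i → d.length ≤ es₂[i].1 := fun i hi h4 =>
    not_lt.1 fun h => absurd ((hfst i hi).1 h) (by omega)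
  cases p
  · refine initiates_of_isLin hlin₂ hw₂ (i := 5) (by omega) rfl (hle 5 _ (by norm_num))
      fun j hj hp => ?_
    rcases Nat.lt_or_ge j 4 with h | h
    · exact (hfst j _).2 h
    · obtain rfl : j = 4 := by omega
      exact Bool.noConfusion hp
  · exact initiates_of_isLin hlin₂ hw₂ (i := 4) (by omega) rfl (hle 4 _ le_rfl)
      fun j hj _ => (hfst j _).2 hj

theorem not_localChoice_of_crossingWord_mem_lang
    (h₁ : crossingWord ∈ G.lang) (h₂ : crossingWord ++ crossingWord ∈ G.lang) :
    ¬ G.LocalChoice := by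
  intro hG
  obtain ⟨ρ₁, hρ₁, es₁, hlin₁, hw₁⟩ := h₁
  obtain ⟨ρ₂, hρ₂, es₂, hlin₂, hw₂⟩ := h₂
  have hne : ρ₁ ≠ ρ₂ := by
    rintro rfl
    have h₁ : es₁.length = 4 := by simpa [crossingWord] using (congrArg List.length hw₁).symm
    have h₂ : es₂.length = 8 := by simpa [crossingWord] using (congrArg List.length hw₂).symm
    have := hlin₁.length_eq.trans hlin₂.length_eq.symm
    omega
  obtain ⟨d, u, a, b, t₁, t₂, hab, rfl, rfl⟩ := exists_branch_of_isRun hρ₁ hρ₂ hne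
  obtain ⟨hua, ha⟩ := hρ₁.edge_of_eq_append
  obtain ⟨hub, hb⟩ := hρ₂.edge_of_eq_append
  obtain ⟨r, hr⟩ := (hG u ⟨a, b, hua, hub, hab⟩).2
  have htriggers : ∀ p, p ∈ G.triggers u := by
    by_cases hlt : ∃ e ∈ (G.pathLabel ((d ++ [u]) ++ a :: t₁)).E, e.1 < (d ++ [u]).length
    · exact fun p => ⟨b, t₂, hub, hb,
        initiates_of_isLin_crossingWord_append hlin₁ hw₁.symm hlin₂ hw₂.symm hlt p⟩
    · push Not at hlt
      exact fun p => ⟨a, t₁, hua, ha, initiates_of_isLin_crossingWord hlin₁ hw₁.symm hlt p⟩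
  have htrue := htriggers true
  have hfalse := htriggers false
  rw [hr, Set.mem_singleton_iff] at htrue hfalse
  exact Bool.noConfusion (htrue.trans hfalse.symm)

end MSG

open PreBMSC

/-- Process `true` sends `0` and then receives `3`; process `false` sends `1` and then
receives `2`. -/
def crossing : PreBMSC ℕ Bool Bool where
  E := {0, 1, 2, 3}
  procLt e f := (e = 0 ∧ f = 3) ∨ (e = 1 ∧ f = 2)
  isSend e := e == 0 || e == 1
  proc e := e == 0 || e == 3
  partner e := if e = 0 then 2 else if e = 1 then 3 else if e = 2 then 0 else 1
  lbl _ := true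

lemma crossing_step_lt {x y : ℕ} (h : crossing.msgRel x y ∨ crossing.procLt x y) : x < y := by
  rcases h with ⟨hx, hs, rfl⟩ | ⟨rfl, rfl⟩ | ⟨rfl, rfl⟩
  · simp only [crossing, Finset.mem_insert, Finset.mem_singleton] at hx
    rcases hx with rfl | rfl | rfl | rfl <;> simp_all [crossing]
  all_goals norm_num

lemma crossing_isBMSC : crossing.IsBMSC where
  procLt_mem := by rintro _ _ (⟨rfl, rfl⟩ | ⟨rfl, rfl⟩) <;> decide
  procLt_irrefl := by rintro _ (⟨rfl, h⟩ | ⟨rfl, h⟩) <;> simp at h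
  procLt_trans := by rintro _ _ _ (⟨rfl, rfl⟩ | ⟨rfl, rfl⟩) (⟨h, -⟩ | ⟨h, -⟩) <;> simp at h
  procLt_total := by simp only [crossing]; decide
  partner_mem := by decide
  partner_invol := by decide
  partner_kind := by decide
  partner_proc := by decide
  partner_lbl := by decide
  vis_antisymm e f h h' := by
    have le_of_vis : ∀ {x y}, crossing.vis x y → x ≤ y := fun h => by
      induction h with
      | refl => exact le_rfl
      | tail _ h ih => exact ih.trans (crossing_step_lt h).le
    exact le_antisymm (le_of_vis h) (le_of_vis h')
  fifo := by rintro _ _ _ hs (⟨rfl, rfl⟩ | ⟨rfl, rfl⟩) <;> simp [crossing] at hs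

def crossingEdge (x y : Fin 4) : Prop :=
  (x = 0 ∧ y = 1) ∨ (x = 1 ∧ y = 2) ∨ (x = 1 ∧ y = 3) ∨ (x = 2 ∧ y = 3)

instance : DecidableRel crossingEdge := fun x y => by unfold crossingEdge; infer_instance

/-- A crossing, then a choice between a second crossing and nothing. -/
@[reducible]
noncomputable def crossingMSG : MSG ℕ Bool Bool where
  S := Fin 4
  finS := inferInstance
  edge := crossingEdge
  s0 := 0
  sf := 3
  lab s := if s = 0 ∨ s = 2 then crossing else emptyPre
  lab_valid s := by
    split_ifs
    exacts [crossing_isBMSC, emptyPre_isBMSC]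
  s0_no_incoming := by decide
  sf_no_outgoing := by decide
  reachable_from_s0 s := by
    have h01 : crossingEdge 0 1 := by decide
    fin_cases s
    exacts [.refl, .single h01, .tail (.single h01) (by decide), .tail (.single h01) (by decide)]
  sf_reachable s := by
    have h13 : crossingEdge 1 3 := by decide
    fin_cases s
    exacts [.head (by decide) (.single h13), .single h13, .single (by decide), .refl]

namespace MSG

lemma crossingMSG_step {σ : List crossingMSG.S} {e f : ℕ × ℕ}
    (h : (crossingMSG.pathLabel σ).msgRel e f ∨ (crossingMSG.pathLabel σ).procLt e f) :
    e.1 < f.1 ∨ e.1 = f.1 ∧ e.2 < f.2 := by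
  rcases step_pathLabel_cases h with h | ⟨h1, s, -, hs⟩
  · exact Or.inl h
  · refine Or.inr ⟨h1.symm, ?_⟩
    dsimp only at hs
    split_ifs at hs
    · exact crossing_step_lt hs
    · rcases hs with ⟨hs, -⟩ | hs <;> simp [emptyPre] at hs

lemma isLin_crossingMSG {σ : List crossingMSG.S} {es : List (ℕ × ℕ)} (hnd : es.Nodup)
    (hE : es.toFinset = (crossingMSG.pathLabel σ).E)
    (hsorted : es.Pairwise fun e f => ¬ (f.1 < e.1 ∨ f.1 = e.1 ∧ f.2 < e.2)) :
    (crossingMSG.pathLabel σ).IsLin es :=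
  (isBMSC_pathLabel σ).isLin_of_pairwise hnd hE (fun _ _ => crossingMSG_step) hsorted

lemma crossingWord_mem_lang : crossingWord ∈ crossingMSG.lang :=
  ⟨[0, 1, 3], ⟨(by decide : List.IsChain crossingEdge [0, 1, 3]), rfl, rfl⟩,
    [(0, 0), (0, 1), (0, 2), (0, 3)],
    isLin_crossingMSG (by decide) (by decide) (by decide), by decide⟩

lemma crossingWord_append_mem_lang : crossingWord ++ crossingWord ∈ crossingMSG.lang :=
  ⟨[0, 1, 2, 3], ⟨(by decide : List.IsChain crossingEdge [0, 1, 2, 3]), rfl, rfl⟩,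
    [(0, 0), (0, 1), (0, 2), (0, 3), (2, 0), (2, 1), (2, 2), (2, 3)],
    isLin_crossingMSG (by decide) (by decide) (by decide), by decide⟩

lemma crossingMSG_isChoice {u : crossingMSG.S} (hu : crossingMSG.IsChoice u) : u = 1 := by
  revert u
  unfold IsChoice
  decide

/-- The send of the first crossing is resolving for both processes. -/
lemma hasResolving_crossingMSG (l : List crossingMSG.S) (P' : Set Bool) :
    (crossingMSG.pathLabel (0 :: l)).HasResolving P' := by
  have hs : (0 :: l)[((0, 0) : ℕ × ℕ).1]? = some 0 := rfl
  have hlab : crossingMSG.lab 0 = crossing := rfl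
  have hmem : ∀ k ∈ crossing.E, ((0, k) : ℕ × ℕ) ∈ (crossingMSG.pathLabel (0 :: l)).E :=
    fun k hk => mem_pathLabel_E.2 ⟨0, hs, hk⟩
  have fields := fun k (hk : k ∈ crossing.E) => pathLabel_fields (e := (0, k)) hs (hlab ▸ hk)
  refine ⟨(0, 0), hmem 0 (by decide), (fields 0 (by decide)).1, fun p _ => ?_⟩
  cases p
  · refine ⟨(0, 2), hmem 2 (by decide), (fields 2 (by decide)).2.1, .single (Or.inl ?_)⟩
    exact ⟨hmem 0 (by decide), (fields 0 (by decide)).1, (fields 0 (by decide)).2.2.1.symm⟩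
  · exact ⟨(0, 0), hmem 0 (by decide), (fields 0 (by decide)).2.1, .refl⟩

lemma crossingMSG_not_reachable_one {s : crossingMSG.S} (hs : crossingMSG.edge 1 s)
    {l : List crossingMSG.S} (hl : (s :: l).IsChain crossingMSG.edge) :
    (s :: l).getLast? ≠ some 1 := by
  have hs2 : 2 ≤ s := by clear hl; revert s; decide
  have hl2 := hl.cons_induction (fun x => 2 ≤ x) l (fun x y hxy hx => by revert x y; decide) hs2
  intro h
  rcases List.mem_cons.1 (List.mem_of_getLast? h) with h1 | h1
  exacts [absurd (h1 ▸ hs2) (by decide), absurd (hl2 1 h1) (by decide)]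

lemma crossingMSG_controllableChoice : crossingMSG.ControllableChoice := by
  intro u hu
  obtain rfl := crossingMSG_isChoice hu
  refine Or.inr ⟨hu, fun σ _ h0 _ => ?_, fun s₁ σ' h1 hch hlast =>
    absurd hlast (crossingMSG_not_reachable_one h1 hch)⟩
  obtain ⟨l, rfl⟩ : ∃ l, σ = 0 :: l := by
    cases σ with
    | nil => simp at h0
    | cons s l => exact ⟨l, by simpa using h0⟩
  exact hasResolving_crossingMSG l _

end MSG

end MSC

open MSC in
/-- The class of MSGs that are language-equivalent to some
local-choice MSG forms a proper subset of the class of MSGs that are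
language-equivalent to some controllable-choice MSG. -/
theorem localChoice_equiv_ssubset_controllableChoice_equiv :
    {G : MSG ℕ Bool Bool | ∃ G' : MSG ℕ Bool Bool, G'.LocalChoice ∧ G.lang = G'.lang} ⊂
    {G : MSG ℕ Bool Bool | ∃ G' : MSG ℕ Bool Bool, G'.ControllableChoice ∧ G.lang = G'.lang} := by
  refine (Set.ssubset_iff_of_subset ?_).2
    ⟨crossingMSG, ⟨crossingMSG, MSG.crossingMSG_controllableChoice, rfl⟩, ?_⟩
  · rintro G ⟨G', hG', hlang⟩
    exact ⟨G', hG'.controllableChoice, hlang⟩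
  rintro ⟨G', hG', hlang⟩
  exact MSG.not_localChoice_of_crossingWord_mem_lang (hlang ▸ MSG.crossingWord_mem_lang)
    (hlang ▸ MSG.crossingWord_append_mem_lang) hG'
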